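/- arXiv:math/0106187 — 2 statements merged into one kernel-verified Lean document; each statement's English description precedes it below -/
import Mathlib

section
/- Let ℏ > 0, N ∈ ℕ, and t⁺ > 0, |t⁻| > 0 real. The Jacobi polynomial k(r) = ∑_{n=0}^{N} (N!/(n!(N−n)!)) · ((t⁺−ℏ)(t⁺−2ℏ)⋯(t⁺−nℏ))/((|t⁻|+ℏ)(|t⁻|+2ℏ)⋯(|t⁻|+nℏ)) · rⁿ satisfies the hypergeometric differential equation r(1−r)k'' + (α⁺ − (α⁻ − N + 1)r)k' + Nα⁻ k = 0, where α± = 1 − t∓/ℏ and t⁻ = −|t⁻|. -/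
/-!
Writing `k = ∑ cₙ rⁿ`, the ratio of consecutive coefficients gives the two-term recurrence
`(n + 1)(n + α⁺) cₙ₊₁ + (N - n)(n + α⁻) cₙ = 0`. Expressed through the Euler operator
`θ = r d/dr`, which multiplies `rⁿ` by `n`, the hypergeometric operator sends `∑ cₙ rⁿ` to the
polynomial whose `n`-th coefficient is exactly the left side of this recurrence.
-/

open Polynomial Finset

theorem Nat.cast_succ_mul_choose_succ {R : Type*} [CommRing R] (N n : ℕ) :
    ((n : R) + 1) * N.choose (n + 1) = ((N : R) - n) * N.choose n := by
  have h := congrArg (Nat.cast : ℕ → R) (Nat.choose_succ_right_eq N n)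
  push_cast at h
  rcases le_or_gt n N with hn | hn
  · rw [Nat.cast_sub hn] at h
    linear_combination h
  · simp [Nat.choose_eq_zero_of_lt hn, Nat.choose_eq_zero_of_lt (hn.trans n.lt_succ_self)]

noncomputable def hypergeomCoeff {𝕜 : Type*} [Field 𝕜] (N : ℕ) (u v : ℕ → 𝕜) (n : ℕ) : 𝕜 :=
  N.choose n * (∏ j ∈ Icc 1 n, u j) / ∏ j ∈ Icc 1 n, v j

theorem hypergeomCoeff_succ_mul {𝕜 : Type*} [Field 𝕜] (N : ℕ) (u v : ℕ → 𝕜)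
    (hv : ∀ j, v j ≠ 0) (n : ℕ) :
    hypergeomCoeff N u v (n + 1) * (((n : 𝕜) + 1) * v (n + 1))
      = hypergeomCoeff N u v n * (((N : 𝕜) - n) * u (n + 1)) := by
  have hprod : ∏ j ∈ Icc 1 n, v j ≠ 0 := prod_ne_zero_iff.mpr fun j _ => hv j
  simp only [hypergeomCoeff, prod_Icc_succ_top (Nat.le_add_left 1 n)]
  field_simp [hv (n + 1)]
  linear_combination (∏ j ∈ Icc 1 n, u j) * u (n + 1) *
    Nat.cast_succ_mul_choose_succ (R := 𝕜) N n

theorem hypergeomCoeff_eq_zero_of_lt {𝕜 : Type*} [Field 𝕜] {N n : ℕ} (u v : ℕ → 𝕜)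
    (h : N < n) : hypergeomCoeff N u v n = 0 := by
  simp [hypergeomCoeff, Nat.choose_eq_zero_of_lt h]

namespace Polynomial

variable {R : Type*} [CommRing R]

theorem coeff_X_mul_derivative (p : R[X]) (n : ℕ) :
    (X * derivative p).coeff n = n * p.coeff n := by
  cases n with
  | zero => simp
  | succ m => rw [coeff_X_mul, coeff_derivative]; push_cast; ring

/-- The recurrence is that of the coefficients of `₂F₁(-N, b; a; X)`. -/
theorem hypergeometric_ode_of_coeff_recurrence (p : R[X]) (N : ℕ) (a b : R)
    (hrec : ∀ n : ℕ, ((n : R) + 1) * (n + a) * p.coeff (n + 1)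
      + ((N : R) - n) * (n + b) * p.coeff n = 0) :
    X * (1 - X) * derivative (derivative p) + (C a - C (b - N + 1) * X) * derivative p
      + C (N * b) * p = 0 := by
  have hEuler : X * (1 - X) * derivative (derivative p) + (C a - C (b - N + 1) * X) * derivative p
      + C (N * b) * p
      = X * derivative (derivative p) - X * derivative (X * derivative p)
        + C a * derivative p - C (b - N) * (X * derivative p) + C (N * b) * p := by
    simp only [derivative_mul, derivative_X, C_sub, C_add, C_1]
    ring
  ext n
  rw [hEuler]
  simp only [coeff_add, coeff_sub, coeff_C_mul, coeff_X_mul_derivative, coeff_derivative,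
    coeff_zero]
  linear_combination hrec n

end Polynomial

theorem stmt13_general (ℏ : ℝ) (hℏ : 0 < ℏ) (N : ℕ) (tp tm : ℝ) (htm : tm < 0)
    (αp αm : ℝ) (hαp : αp = 1 - tm / ℏ) (hαm : αm = 1 - tp / ℏ)
    (k : ℝ → ℝ)
    (hk : ∀ r : ℝ, k r = ∑ n ∈ Finset.range (N+1),
      (N.choose n : ℝ) * (∏ j ∈ Finset.Icc 1 n, (tp - (j:ℝ)*ℏ)) /
        (∏ j ∈ Finset.Icc 1 n, (-tm + (j:ℝ)*ℏ)) * r^n) :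
    ∀ r : ℝ, r*(1-r) * deriv (deriv k) r + (αp - (αm - N + 1)*r) * deriv k r
      + N * αm * k r = 0 := by
  set c := hypergeomCoeff N (fun j : ℕ => tp - j * ℏ) (fun j : ℕ => -tm + j * ℏ)
  have hv (j : ℕ) : -tm + j * ℏ ≠ 0 := by
    have : 0 ≤ (j : ℝ) * ℏ := by positivity
    linarith
  set p : ℝ[X] := ∑ n ∈ range (N + 1), C (c n) * X ^ n
  have hkp : k = fun r => p.eval r :=
    funext fun r => by simp [hk, p, c, hypergeomCoeff, eval_finsetSum]
  have hcoeff (n : ℕ) : p.coeff n = c n := by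
    simp only [p, finsetSum_coeff, coeff_C_mul_X_pow, sum_ite_eq, mem_range]
    split_ifs with h
    exacts [rfl, (hypergeomCoeff_eq_zero_of_lt _ _ (by omega)).symm]
  have hrec (n : ℕ) : ((n : ℝ) + 1) * (n + αp) * p.coeff (n + 1)
      + ((N : ℝ) - n) * (n + αm) * p.coeff n = 0 := by
    have hstep := hypergeomCoeff_succ_mul N (fun j : ℕ => tp - j * ℏ) _ hv n
    rw [hcoeff, hcoeff, hαp, hαm]
    field_simp
    push_cast at hstep
    linear_combination hstep
  have hode := hypergeometric_ode_of_coeff_recurrence p N αp αm hrec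
  have hderiv : deriv k = fun x => (derivative p).eval x :=
    funext fun x => by rw [hkp]; exact Polynomial.deriv p
  intro r
  rw [hderiv, Polynomial.deriv, hkp]
  simpa using congrArg (eval r) hode

theorem stmt13 (ℏ : ℝ) (hℏ : 0 < ℏ) (N : ℕ) (tp tm : ℝ) (htp : 0 < tp) (htm : tm < 0)
    (αp αm : ℝ) (hαp : αp = 1 - tm / ℏ) (hαm : αm = 1 - tp / ℏ)
    (k : ℝ → ℝ)
    (hk : ∀ r : ℝ, k r = ∑ n ∈ Finset.range (N+1),
      (N.choose n : ℝ) * (∏ j ∈ Finset.Icc 1 n, (tp - (j:ℝ)*ℏ)) /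
        (∏ j ∈ Finset.Icc 1 n, (-tm + (j:ℝ)*ℏ)) * r^n) :
    ∀ r : ℝ, r*(1-r) * deriv (deriv k) r + (αp - (αm - N + 1)*r) * deriv k r
      + N * αm * k r = 0 :=
  stmt13_general ℏ hℏ N tp tm htm αp αm hαp hαm k hk
end

section
/- Let ℏ > 0 and r real. Then the product k(r)·ℓ(r), where k(r) = ∑_{n∈ℤ} exp(−n²ℏ+n(r−ℏ)) and ℓ(r) = (ℏ/4π)^{1/2} e^{−(r−ℏ)²/(4ℏ)}, equals (1/2)·θ(iπ(r−ℏ)/ℏ, e^{−π²/ℏ}), where θ(α,q) = ∑_{m∈ℤ} q^{m²}e^{mα}; in particular k(r)ℓ(r) is a real-analytic function of r with period 2ℏ... (it satisfies k(r+2ℏ)ℓ(r+2ℏ) = k(r)ℓ(r)). -/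
open Real

lemma key16 (ℏ : ℝ) (hℏ : 0 < ℏ) (r : ℝ) :
    (∑' n : ℤ, Complex.exp (-(ℏ:ℂ)*(n:ℂ)^2 + (n:ℂ)*((r:ℂ)-(ℏ:ℂ)))) =
    (Real.sqrt (π/ℏ) : ℂ) * Complex.exp ((((r-ℏ)^2/(4*ℏ) : ℝ) : ℂ)) *
      ∑' m : ℤ, Complex.exp (-(π:ℂ)^2/(ℏ:ℂ)*(m:ℂ)^2
        + (m:ℂ)*Complex.I*(π:ℂ)*((r:ℂ)-(ℏ:ℂ))/(ℏ:ℂ)) := by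
  have hπ : (0:ℝ) < π := Real.pi_pos
  have hπ' : (π:ℂ) ≠ 0 := by exact_mod_cast hπ.ne'
  have hℏ' : (ℏ:ℂ) ≠ 0 := by exact_mod_cast hℏ.ne'
  have ha : 0 < ((ℏ:ℂ)/(π:ℂ)).re := by
    rw [show (ℏ:ℂ)/(π:ℂ) = ((ℏ/π:ℝ):ℂ) by push_cast; ring]
    simpa using div_pos hℏ hπ
  set b : ℂ := -((r:ℂ)-(ℏ:ℂ))/(2*(π:ℂ)) with hb_def
  have h1 : (∑' n : ℤ, Complex.exp (-(ℏ:ℂ)*(n:ℂ)^2 + (n:ℂ)*((r:ℂ)-(ℏ:ℂ)))) =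
      ∑' n : ℤ, Complex.exp (-(π:ℂ) * ((ℏ:ℂ)/(π:ℂ)) * (n:ℂ)^2 + 2*(π:ℂ)*b*(n:ℂ)) := by
    rw [← (Equiv.neg ℤ).tsum_eq
      (fun n : ℤ => Complex.exp (-(π:ℂ) * ((ℏ:ℂ)/(π:ℂ)) * (n:ℂ)^2 + 2*(π:ℂ)*b*(n:ℂ)))]
    refine tsum_congr fun n => ?_
    have hn : ((Equiv.neg ℤ) n : ℂ) = -(n:ℂ) := by simp
    rw [hn]
    congr 1
    rw [hb_def]
    field_simp
  rw [h1, Complex.tsum_exp_neg_quadratic ha b]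
  have hsqrt : ((ℏ:ℂ)/(π:ℂ)) ^ (1/2 : ℂ) = (Real.sqrt (ℏ/π) : ℂ) := by
    rw [show (ℏ:ℂ)/(π:ℂ) = ((ℏ/π:ℝ):ℂ) by push_cast; ring,
      show (1/2 : ℂ) = ((1/2 : ℝ):ℂ) by norm_num,
      ← Complex.ofReal_cpow (by positivity) (1/2), ← Real.sqrt_eq_rpow]
  have hconst : (1 : ℂ) / ((ℏ:ℂ)/(π:ℂ)) ^ (1/2 : ℂ) = (Real.sqrt (π/ℏ) : ℂ) := by
    rw [hsqrt, show (π/ℏ : ℝ) = (ℏ/π)⁻¹ by field_simp, Real.sqrt_inv]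
    push_cast
    ring
  rw [hconst, mul_assoc]
  congr 1
  rw [← tsum_mul_left]
  refine tsum_congr fun n => ?_
  rw [← Complex.exp_add]
  congr 1
  have hsq : ((n:ℂ) + Complex.I*b)^2 = (n:ℂ)^2 - b^2 + 2*(n:ℂ)*Complex.I*b := by
    linear_combination b^2 * Complex.I_sq
  rw [hsq, hb_def]
  push_cast
  field_simp
  ring

theorem stmt16 (ℏ : ℝ) (hℏ : 0 < ℏ)
    (k ℓ : ℝ → ℝ)
    (hk : ∀ r : ℝ, k r = ∑' n : ℤ, Real.exp (-(n:ℝ)^2*ℏ + (n:ℝ)*(r-ℏ)))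
    (hl : ∀ r : ℝ, ℓ r = Real.sqrt (ℏ/(4*π)) * Real.exp (-(r-ℏ)^2/(4*ℏ))) :
    (∀ r : ℝ, ((k r * ℓ r : ℝ) : ℂ) =
      (1/2 : ℂ) * ∑' m : ℤ, ((Real.exp (-π^2/ℏ) : ℝ) : ℂ) ^ (m^2) *
        Complex.exp ((m:ℂ) * (Complex.I * (π:ℂ) * ((r:ℂ)-(ℏ:ℂ))/(ℏ:ℂ)))) ∧
    (∀ r : ℝ, k (r + 2*ℏ) * ℓ (r + 2*ℏ) = k r * ℓ r) := by
  have hπ : (0:ℝ) < π := Real.pi_pos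
  have hℏ' : (ℏ:ℂ) ≠ 0 := by exact_mod_cast hℏ.ne'
  have hmain : ∀ r : ℝ, ((k r * ℓ r : ℝ) : ℂ) =
      (1/2 : ℂ) * ∑' m : ℤ, ((Real.exp (-π^2/ℏ) : ℝ) : ℂ) ^ (m^2) *
        Complex.exp ((m:ℂ) * (Complex.I * (π:ℂ) * ((r:ℂ)-(ℏ:ℂ))/(ℏ:ℂ))) := by
    intro r
    rw [hk, hl]
    rw [Complex.ofReal_mul, Complex.ofReal_tsum, Complex.ofReal_mul, Complex.ofReal_exp]
    have hL : (∑' n : ℤ, ((Real.exp (-(n:ℝ)^2*ℏ + (n:ℝ)*(r-ℏ)) : ℝ) : ℂ)) =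
        ∑' n : ℤ, Complex.exp (-(ℏ:ℂ)*(n:ℂ)^2 + (n:ℂ)*((r:ℂ)-(ℏ:ℂ))) := by
      refine tsum_congr fun n => ?_
      rw [Complex.ofReal_exp]
      congr 1
      push_cast
      ring
    rw [hL, key16 ℏ hℏ r]
    have hE : Complex.exp ((((r-ℏ)^2/(4*ℏ) : ℝ) : ℂ)) *
        Complex.exp (((-(r-ℏ)^2/(4*ℏ) : ℝ) : ℂ)) = 1 := by
      rw [← Complex.exp_add,
        show ((((r-ℏ)^2/(4*ℏ) : ℝ) : ℂ)) + (((-(r-ℏ)^2/(4*ℏ) : ℝ) : ℂ)) = 0 by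
          push_cast; ring,
        Complex.exp_zero]
    have hC : Real.sqrt (π/ℏ) * Real.sqrt (ℏ/(4*π)) = 1/2 := by
      rw [← Real.sqrt_mul (by positivity),
        show (π/ℏ) * (ℏ/(4*π)) = (1/2)^2 by field_simp; ring,
        Real.sqrt_sq (by norm_num)]
    calc ((Real.sqrt (π/ℏ) : ℂ) * Complex.exp ((((r-ℏ)^2/(4*ℏ) : ℝ) : ℂ)) *
          ∑' m : ℤ, Complex.exp (-(π:ℂ)^2/(ℏ:ℂ)*(m:ℂ)^2
            + (m:ℂ)*Complex.I*(π:ℂ)*((r:ℂ)-(ℏ:ℂ))/(ℏ:ℂ))) *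
          ((Real.sqrt (ℏ/(4*π)) : ℂ) * Complex.exp (((-(r-ℏ)^2/(4*ℏ) : ℝ) : ℂ)))
        = (((Real.sqrt (π/ℏ) * Real.sqrt (ℏ/(4*π)) : ℝ)) : ℂ) *
          (Complex.exp ((((r-ℏ)^2/(4*ℏ) : ℝ) : ℂ)) * Complex.exp (((-(r-ℏ)^2/(4*ℏ) : ℝ) : ℂ))) *
          ∑' m : ℤ, Complex.exp (-(π:ℂ)^2/(ℏ:ℂ)*(m:ℂ)^2
            + (m:ℂ)*Complex.I*(π:ℂ)*((r:ℂ)-(ℏ:ℂ))/(ℏ:ℂ)) := by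
          push_cast; ring
      _ = (1/2 : ℂ) * ∑' m : ℤ, Complex.exp (-(π:ℂ)^2/(ℏ:ℂ)*(m:ℂ)^2
            + (m:ℂ)*Complex.I*(π:ℂ)*((r:ℂ)-(ℏ:ℂ))/(ℏ:ℂ)) := by
          rw [hE, hC]; push_cast; ring
      _ = (1/2 : ℂ) * ∑' m : ℤ, ((Real.exp (-π^2/ℏ) : ℝ) : ℂ) ^ (m^2) *
            Complex.exp ((m:ℂ) * (Complex.I * (π:ℂ) * ((r:ℂ)-(ℏ:ℂ))/(ℏ:ℂ))) := by
          congr 1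
          refine tsum_congr fun m => ?_
          rw [Complex.ofReal_exp, ← Complex.exp_int_mul, ← Complex.exp_add]
          congr 1
          push_cast
          ring
  refine ⟨hmain, fun r => ?_⟩
  have h1 := hmain r
  have h2 := hmain (r + 2*ℏ)
  have hRHS : (∑' m : ℤ, ((Real.exp (-π^2/ℏ) : ℝ) : ℂ) ^ (m^2) *
        Complex.exp ((m:ℂ) * (Complex.I * (π:ℂ) * (((r + 2*ℏ : ℝ):ℂ)-(ℏ:ℂ))/(ℏ:ℂ)))) =
      ∑' m : ℤ, ((Real.exp (-π^2/ℏ) : ℝ) : ℂ) ^ (m^2) *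
        Complex.exp ((m:ℂ) * (Complex.I * (π:ℂ) * ((r:ℂ)-(ℏ:ℂ))/(ℏ:ℂ))) := by
    refine tsum_congr fun m => ?_
    congr 1
    have hsplit : ((m:ℂ) * (Complex.I * (π:ℂ) * (((r + 2*ℏ : ℝ):ℂ)-(ℏ:ℂ))/(ℏ:ℂ))) =
        (m:ℂ) * (Complex.I * (π:ℂ) * ((r:ℂ)-(ℏ:ℂ))/(ℏ:ℂ)) + (m:ℂ) * (2*(π:ℂ)*Complex.I) := by
      push_cast
      field_simp
      ring
    rw [hsplit, Complex.exp_add, Complex.exp_int_mul_two_pi_mul_I, mul_one]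
  have hcc : ((k (r + 2*ℏ) * ℓ (r + 2*ℏ) : ℝ) : ℂ) = ((k r * ℓ r : ℝ) : ℂ) := by
    rw [h1, h2, hRHS]
  exact_mod_cast hcc
end
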